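/- arXiv:1510.04998 — 2 statements merged into one kernel-verified Lean document; each statement's English description precedes it below -/
import Mathlib

section
/- For every a ∈ I = [1/2, 1] and every compact set K ⊆ cl D that is norming for O(cl D), one has K ∩ ({a} × cl 𝔻) ≠ ∅. -/
/-!
A compact norming set `K` must meet the set where `|f|` attains its maximum over `cl D`, for every
`f ∈ O(cl D)` not vanishing there. Take `f(z, w) = w · exp (4 · exp (i (log z - log a)))`, with the
branch of `log z` whose argument runs from `0` to `2π` along `cl D`; it is holomorphic near `cl D`
because near the positive real axis `cl D` splits into `|w| ≤ 1` and `|w| ≥ 2`, which may lie on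
different sheets. Now `|f| = |w| · exp (4 e^{-arg z} cos log (|z| / a))`. Where `|w| ≤ 1` this is at
most `e⁴`, with equality only if `arg z = 0` and `|z| = a`; where `|w| > 1` we have `arg z ≥ π / 2`,
so `|f| ≤ 3 e² < e⁴`. Hence `|f|` peaks on `cl D` exactly on `{a} × cl 𝔻`.
-/

open Set Complex

noncomputable section

/-- The bounded Hartogs domain `D ⊂ ℂ²` from the paper. -/
def domD : Set (ℂ × ℂ) :=
  {p | ∃ r φ : ℝ, 1 / 2 < r ∧ r < 1 ∧ 0 < φ ∧ φ < 2 * Real.pi ∧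
    p.1 = (r : ℂ) * Complex.exp (φ * Complex.I) ∧
    (φ ≤ Real.pi / 2 → ‖p.2‖ < 1) ∧
    (Real.pi / 2 < φ → φ < 3 * Real.pi / 2 → ‖p.2‖ < 3) ∧
    (3 * Real.pi / 2 ≤ φ → 2 < ‖p.2‖ ∧ ‖p.2‖ < 3)}

/-- `K` is norming for the family `F` of functions on `closure S`. -/
def IsNorming {E : Type*} [TopologicalSpace E] (S K : Set E) (F : Set (E → ℂ)) : Prop :=
  ∀ f ∈ F, sSup ((fun p => ‖f p‖) '' K) =
    sSup ((fun p => ‖f p‖) '' closure S)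

/-- `O(cl S)`: functions extending holomorphically to an open neighborhood of `closure S`. -/
def Ocl {E : Type*} [NormedAddCommGroup E] [NormedSpace ℂ E] (S : Set E) :
    Set (E → ℂ) :=
  {f | ∃ U : Set E, IsOpen U ∧ closure S ⊆ U ∧ DifferentiableOn ℂ f U}

/-- `A(S)`: functions continuous on `closure S` and holomorphic on `S`. -/
def Acl {E : Type*} [NormedAddCommGroup E] [NormedSpace ℂ E] (S : Set E) :
    Set (E → ℂ) :=
  {f | ContinuousOn f (closure S) ∧ DifferentiableOn ℂ f S}

/-- `K` is the minimal compact norming set for the family `F` on `closure S`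
(i.e. the Shilov-type boundary associated with `F`). -/
def IsShilovFor {E : Type*} [NormedAddCommGroup E] [NormedSpace ℂ E]
    (S : Set E) (F : Set (E → ℂ)) (K : Set E) : Prop :=
  IsCompact K ∧ K ⊆ closure S ∧ IsNorming S K F ∧
    ∀ K' : Set E, IsCompact K' → K' ⊆ closure S → IsNorming S K' F → K ⊆ K'

open scoped Real Topology

section Norming

theorem IsNorming.exists_norm_eq {E : Type*} [TopologicalSpace E] {S K : Set E}
    {F : Set (E → ℂ)} (hn : IsNorming S K F) (hK : IsCompact K) (hKS : K ⊆ closure S)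
    {f : E → ℂ} (hf : f ∈ F) (hfK : ContinuousOn f K) {q : E} (hq : q ∈ closure S)
    (hmax : IsMaxOn (fun p => ‖f p‖) (closure S) q) (hq0 : f q ≠ 0) :
    ∃ k ∈ K, ‖f k‖ = ‖f q‖ := by
  have hsup : sSup ((fun p => ‖f p‖) '' closure S) = ‖f q‖ :=
    IsGreatest.csSup_eq ⟨mem_image_of_mem _ hq, forall_mem_image.2 fun p hp => hmax hp⟩
  have hK₀ : K.Nonempty := by
    rw [nonempty_iff_ne_empty]
    rintro rfl
    have h := hn f hf
    rw [image_empty, Real.sSup_empty, hsup] at h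
    exact hq0 (norm_eq_zero.1 h.symm)
  obtain ⟨k, hk, hkmax⟩ := hK.exists_isMaxOn hK₀ (continuous_norm.comp_continuousOn hfK)
  refine ⟨k, hk, le_antisymm (hmax (hKS hk)) ?_⟩
  rw [← hsup, ← hn f hf]
  exact csSup_le (hK₀.image _) (forall_mem_image.2 fun p hp => hkmax hp)

variable {E : Type*} [NormedAddCommGroup E] [NormedSpace ℂ E] {S : Set E} {f : E → ℂ}

theorem continuousOn_closure_of_mem_Ocl (hf : f ∈ Ocl S) : ContinuousOn f (closure S) := by
  obtain ⟨U, -, hSU, hfU⟩ := hf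
  exact hfU.continuousOn.mono hSU

theorem mem_Ocl_of_analyticAt (hf : ∀ p ∈ closure S, AnalyticAt ℂ f p) : f ∈ Ocl S :=
  ⟨{p | AnalyticAt ℂ f p}, isOpen_analyticAt ℂ f, hf,
    fun _ hp => hp.differentiableAt.differentiableWithinAt⟩

end Norming

/-- A Cartesian description of `closure domD`. -/
def domDBar : Set (ℂ × ℂ) :=
  {p | 1 / 2 ≤ ‖p.1‖ ∧ ‖p.1‖ ≤ 1 ∧ ‖p.2‖ ≤ 3 ∧
    (0 < p.1.re → 0 < p.1.im → ‖p.2‖ ≤ 1) ∧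
    (0 < p.1.re → p.1.im < 0 → 2 ≤ ‖p.2‖) ∧
    (|p.1.im| < p.1.re → 1 < ‖p.2‖ → 2 ≤ ‖p.2‖)}

theorem isClosed_domDBar : IsClosed domDBar := by
  simp only [domDBar, ofPred_and]
  repeat' first
    | apply IsClosed.inter
    | apply isClosed_imp
    | apply isClosed_le
    | apply isOpen_lt
  all_goals fun_prop

theorem domD_subset_domDBar : domD ⊆ domDBar := by
  rintro ⟨_, w⟩ ⟨r, φ, hr₁, hr₂, hφ₀, hφ₁, rfl, hw₁, hw₂, hw₃⟩
  have hr : 0 < r := by linarith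
  have hcos : 0 < Real.cos φ → φ < π / 2 ∨ 3 * π / 2 < φ := by
    intro h
    by_contra! hφ
    exact h.not_ge (Real.cos_nonpos_of_pi_div_two_le_of_le hφ.1 (by linarith [hφ.2]))
  have hsin₁ : φ < π / 2 → 0 ≤ Real.sin φ := fun h =>
    Real.sin_nonneg_of_nonneg_of_le_pi hφ₀.le (by linarith [Real.pi_pos])
  have hsin₂ : 3 * π / 2 < φ → Real.sin φ ≤ 0 := fun h => by
    rw [← Real.sin_sub_two_pi]
    exact Real.sin_nonpos_of_nonpos_of_neg_pi_le (by linarith) (by linarith)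
  simp only [domDBar, mem_ofPred_eq, norm_mul, norm_real, norm_exp_ofReal_mul_I,
    re_ofReal_mul, im_ofReal_mul, exp_ofReal_mul_I_re, exp_ofReal_mul_I_im,
    Real.norm_of_nonneg hr.le, mul_one, mul_pos_iff_of_pos_left hr]
  refine ⟨hr₁.le, hr₂.le, ?_, fun hc hs => ?_, fun hc hs => ?_, fun h => ?_⟩
  · rcases le_or_gt φ (π / 2) with h₁ | h₁
    · linarith [hw₁ h₁]
    rcases lt_or_ge φ (3 * π / 2) with h₂ | h₂
    · exact (hw₂ h₁ h₂).le
    · exact (hw₃ h₂).2.le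
  · rcases hcos hc with h | h
    · exact (hw₁ h.le).le
    · nlinarith [hsin₂ h]
  · rcases hcos hc with h | h
    · nlinarith [hsin₁ h]
    · exact (hw₃ h.le).1.le
  · have hc : 0 < Real.cos φ := pos_of_mul_pos_right ((abs_nonneg _).trans_lt h) hr.le
    intro hw
    rcases hcos hc with h | h
    · linarith [hw₁ h.le]
    · exact (hw₃ h.le).1.le

theorem closure_domD_subset_domDBar : closure domD ⊆ domDBar :=
  closure_minimal domD_subset_domDBar isClosed_domDBar

/-- The branch of `log z` with argument in `[0, 2π]` along `closure domD`; near the positive real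
axis `3 / 2` separates the part `‖w‖ ≤ 1` (argument near `0`) from `‖w‖ ≥ 2` (near `2π`). -/
def logD (p : ℂ × ℂ) : ℂ :=
  if |p.1.im| < p.1.re then
    if 3 / 2 ≤ ‖p.2‖ then log p.1 + 2 * π * I else log p.1
  else log (-p.1) + π * I

theorem log_neg_add_pi_mul_I_of_im_pos {z : ℂ} (h : 0 < z.im) : log (-z) + π * I = log z := by
  apply Complex.ext <;> simp [log_re, log_im, arg_neg_eq_arg_sub_pi_of_im_pos h]

theorem log_neg_add_pi_mul_I_of_im_neg {z : ℂ} (h : z.im < 0) :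
    log (-z) + π * I = log z + 2 * π * I := by
  apply Complex.ext
  · simp [log_re]
  · simp [log_im, arg_neg_eq_arg_add_pi_of_im_neg h]
    ring

theorem ne_zero_of_mem_domDBar {p : ℂ × ℂ} (hp : p ∈ domDBar) : p.1 ≠ 0 := by
  intro h
  have := hp.1
  rw [h, norm_zero] at this
  norm_num at this

theorem logD_eq_log {q : ℂ × ℂ} (hw : ‖q.2‖ < 3 / 2) (h : |q.1.im| < q.1.re ∨ 0 < q.1.im) :
    logD q = log q.1 := by
  by_cases hin : |q.1.im| < q.1.re
  · simp [logD, hin, hw.not_ge]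
  · simp [logD, hin, log_neg_add_pi_mul_I_of_im_pos (h.resolve_left hin)]

theorem logD_eq_log_add_two_pi_mul_I {q : ℂ × ℂ} (hw : 3 / 2 < ‖q.2‖)
    (h : |q.1.im| < q.1.re ∨ q.1.im < 0) : logD q = log q.1 + 2 * π * I := by
  by_cases hin : |q.1.im| < q.1.re
  · simp [logD, hin, hw.le]
  · simp [logD, hin, log_neg_add_pi_mul_I_of_im_neg (h.resolve_left hin)]

theorem mem_domDBar_sheets {p : ℂ × ℂ} (hp : p ∈ domDBar) (h : |p.1.im| ≤ p.1.re) :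
    0 < p.1.re ∧ ((‖p.2‖ < 3 / 2 ∧ (|p.1.im| < p.1.re ∨ 0 < p.1.im)) ∨
      (3 / 2 < ‖p.2‖ ∧ (|p.1.im| < p.1.re ∨ p.1.im < 0))) := by
  have hp₀ := ne_zero_of_mem_domDBar hp
  obtain ⟨-, -, -, hw₁, hw₂, hw₃⟩ := hp
  have hre : 0 < p.1.re := by
    refine ((abs_nonneg _).trans h).lt_of_ne fun hre => hp₀ (Complex.ext hre.symm ?_)
    exact abs_nonpos_iff.1 (h.trans_eq hre.symm)
  refine ⟨hre, ?_⟩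
  rcases h.lt_or_eq with hin | hrays
  · rcases le_or_gt ‖p.2‖ 1 with hw | hw
    · exact .inl ⟨by linarith, .inl hin⟩
    · exact .inr ⟨by linarith [hw₃ hin hw], .inl hin⟩
  rcases (abs_eq hre.le).1 hrays with him | him
  · exact .inl ⟨by linarith [hw₁ hre (him ▸ hre)], .inr (him ▸ hre)⟩
  · have him' : p.1.im < 0 := by linarith
    exact .inr ⟨by linarith [hw₂ hre him'], .inr him'⟩

theorem exists_analyticAt_eventuallyEq_logD {p : ℂ × ℂ} (hp : p ∈ domDBar) :
    ∃ g : ℂ → ℂ, AnalyticAt ℂ g p.1 ∧ logD =ᶠ[𝓝 p] fun q => g q.1 := by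
  have hre : Continuous fun q : ℂ × ℂ => q.1.re := by fun_prop
  have him : Continuous fun q : ℂ × ℂ => q.1.im := by fun_prop
  have hw : Continuous fun q : ℂ × ℂ => ‖q.2‖ := by fun_prop
  rcases lt_or_ge p.1.re |p.1.im| with hout | hin
  · have hslit : -p.1 ∈ slitPlane := by
      rcases eq_or_ne p.1.im 0 with him₀ | him₀
      · rw [him₀, abs_zero] at hout
        exact .inl (by simpa using hout)
      · exact .inr (by simpa using him₀)
    have hout' : ∀ᶠ q in 𝓝 p, q.1.re < |q.1.im| := (isOpen_lt hre him.abs).mem_nhds hout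
    refine ⟨fun u => log (-u) + π * I,
      ((analyticAt_clog hslit).comp analyticAt_id.neg).add analyticAt_const, ?_⟩
    filter_upwards [hout'] with q hq
    simp [logD, hq.not_gt]
  obtain ⟨hre₀, ⟨hsmall, hsheet⟩ | ⟨hbig, hsheet⟩⟩ := mem_domDBar_sheets hp hin
  · have hsmall' : ∀ᶠ q in 𝓝 p, ‖q.2‖ < 3 / 2 := (isOpen_lt hw continuous_const).mem_nhds hsmall
    have hsheet' : ∀ᶠ q in 𝓝 p, |q.1.im| < q.1.re ∨ 0 < q.1.im :=
      ((isOpen_lt him.abs hre).union (isOpen_lt continuous_const him)).mem_nhds hsheet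
    refine ⟨log, analyticAt_clog (.inl hre₀), ?_⟩
    filter_upwards [hsmall', hsheet'] with q hq₁ hq₂ using logD_eq_log hq₁ hq₂
  · have hbig' : ∀ᶠ q in 𝓝 p, 3 / 2 < ‖q.2‖ := (isOpen_lt continuous_const hw).mem_nhds hbig
    have hsheet' : ∀ᶠ q in 𝓝 p, |q.1.im| < q.1.re ∨ q.1.im < 0 :=
      ((isOpen_lt him.abs hre).union (isOpen_lt him continuous_const)).mem_nhds hsheet
    refine ⟨fun u => log u + 2 * π * I, (analyticAt_clog (.inl hre₀)).add analyticAt_const, ?_⟩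
    filter_upwards [hbig', hsheet'] with q hq₁ hq₂ using logD_eq_log_add_two_pi_mul_I hq₁ hq₂

def peakD (a : ℝ) (p : ℂ × ℂ) : ℂ :=
  p.2 * exp (4 * exp (I * (logD p - Real.log a)))

theorem analyticAt_peakD (a : ℝ) {p : ℂ × ℂ} (hp : p ∈ domDBar) : AnalyticAt ℂ (peakD a) p := by
  obtain ⟨g, hg, hlog⟩ := exists_analyticAt_eventuallyEq_logD hp
  have hpeak : AnalyticAt ℂ (fun q : ℂ × ℂ => q.2 * exp (4 * exp (I * (g q.1 - Real.log a)))) p :=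
    analyticAt_snd.mul (analyticAt_const.mul
      (analyticAt_const.mul ((hg.comp analyticAt_fst).sub analyticAt_const)).cexp').cexp'
  exact hpeak.congr (hlog.mono fun q hq => by simp [peakD, hq])

theorem logD_re (p : ℂ × ℂ) : (logD p).re = Real.log ‖p.1‖ := by
  unfold logD
  split_ifs <;> simp [log_re]

theorem logD_im_spec {p : ℂ × ℂ} (hp : p ∈ domDBar) :
    0 ≤ (logD p).im ∧ (1 < ‖p.2‖ → π / 2 ≤ (logD p).im) ∧
      ((logD p).im = 0 → p.1 = ‖p.1‖) := by
  obtain ⟨-, -, -, hw₁, hw₂, hw₃⟩ := hp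
  unfold logD
  split_ifs with hin hw
  · have him : (log p.1 + 2 * π * I).im = arg p.1 + 2 * π := by simp [log_im]
    rw [him]
    have := neg_pi_lt_arg p.1
    have := Real.pi_pos
    exact ⟨by linarith, fun _ => by linarith, fun h => by linarith⟩
  · have hre : 0 < p.1.re := (abs_nonneg _).trans_lt hin
    have him : 0 ≤ p.1.im := not_lt.1 fun him => hw (by linarith [hw₂ hre him])
    rw [log_im]
    refine ⟨arg_nonneg_iff.2 him, fun hw' => absurd (hw₃ hin hw') (by linarith), fun h => ?_⟩
    obtain ⟨hre', him'⟩ := arg_eq_zero_iff.1 h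
    have hz : p.1 = (p.1.re : ℂ) := Complex.ext rfl (by simp [him'])
    rw [hz, norm_real, Real.norm_of_nonneg hre']
  · have him : (log (-p.1) + π * I).im = arg (-p.1) + π := by simp [log_im]
    rw [him]
    have := neg_pi_lt_arg (-p.1)
    refine ⟨by linarith, fun hw => ?_, fun h => by linarith⟩
    have hquadrant : 0 ≤ (-p.1).re ∨ 0 ≤ (-p.1).im := by
      by_contra! h
      simp only [neg_re, neg_im, Left.neg_neg_iff] at h
      linarith [hw₁ h.1 h.2]
    linarith [neg_pi_div_two_le_arg_iff.2 hquadrant]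

theorem norm_peakD (a : ℝ) (p : ℂ × ℂ) : ‖peakD a p‖ = ‖p.2‖ *
    Real.exp (4 * (Real.exp (-(logD p).im) * Real.cos ((logD p).re - Real.log a))) := by
  simp [peakD, norm_exp, exp_re]

theorem norm_peakD_lt_of_one_lt (a : ℝ) {p : ℂ × ℂ} (hp : p ∈ domDBar) (hw : 1 < ‖p.2‖) :
    ‖peakD a p‖ < Real.exp 4 := by
  rw [norm_peakD]
  set y := (logD p).im
  have hy : π / 2 ≤ y := (logD_im_spec hp).2.1 hw
  have hexp : Real.exp (-y) ≤ 1 / 2 := by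
    rw [Real.exp_neg, inv_le_comm₀ (Real.exp_pos y) (by norm_num)]
    linarith [Real.add_one_le_exp y, Real.pi_gt_three]
  have hcos := mul_le_mul_of_nonneg_left (Real.cos_le_one ((logD p).re - Real.log a))
    (Real.exp_pos (-y)).le
  have hthree : 3 < Real.exp 2 := by linarith [Real.add_one_lt_exp (two_ne_zero (α := ℝ))]
  calc ‖p.2‖ * Real.exp (4 * (Real.exp (-y) * Real.cos ((logD p).re - Real.log a)))
      ≤ 3 * Real.exp 2 := by
        gcongr
        · exact hp.2.2.1
        · linarith
    _ < Real.exp 2 * Real.exp 2 := by gcongr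
    _ = Real.exp 4 := by rw [← Real.exp_add]; norm_num

theorem norm_peakD_le (a : ℝ) {p : ℂ × ℂ} (hp : p ∈ domDBar) : ‖peakD a p‖ ≤ Real.exp 4 := by
  rcases lt_or_ge 1 ‖p.2‖ with hw | hw
  · exact (norm_peakD_lt_of_one_lt a hp hw).le
  rw [norm_peakD]
  have hexp : Real.exp (-(logD p).im) ≤ 1 :=
    Real.exp_le_one_iff.2 (by linarith [(logD_im_spec hp).1])
  have hcos := mul_le_mul_of_nonneg_left (Real.cos_le_one ((logD p).re - Real.log a))
    (Real.exp_pos (-(logD p).im)).le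
  calc _ ≤ 1 * Real.exp 4 := by gcongr; linarith
    _ = Real.exp 4 := one_mul _

theorem eq_zero_of_one_le_exp_neg_mul_cos {x y : ℝ} (hy : 0 ≤ y) (hx : |x| < 2 * π)
    (h : 1 ≤ Real.exp (-y) * Real.cos x) : y = 0 ∧ x = 0 := by
  have hexp : Real.exp (-y) ≤ 1 := Real.exp_le_one_iff.2 (by linarith)
  have hcos := mul_le_mul_of_nonneg_left (Real.cos_le_one x) (Real.exp_pos (-y)).le
  have hy₀ : y = 0 := by
    have : Real.exp (-y) = 1 := by linarith
    linarith [(Real.exp_eq_one_iff (-y)).1 this]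
  refine ⟨hy₀, (Real.cos_eq_one_iff_of_lt_of_lt ?_ ?_).1 (le_antisymm (Real.cos_le_one x) ?_)⟩
  · linarith [abs_lt.1 hx]
  · linarith [abs_lt.1 hx]
  · simpa [hy₀] using h

theorem eq_of_norm_peakD_eq {a : ℝ} (ha : a ∈ Icc (1 / 2 : ℝ) 1) {p : ℂ × ℂ} (hp : p ∈ domDBar)
    (h : ‖peakD a p‖ = Real.exp 4) : p.1 = a ∧ ‖p.2‖ ≤ 1 := by
  have hw : ‖p.2‖ ≤ 1 := not_lt.1 fun hw => (norm_peakD_lt_of_one_lt a hp hw).ne h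
  obtain ⟨hy, -, hreal⟩ := logD_im_spec hp
  have hmax : 1 ≤ Real.exp (-(logD p).im) * Real.cos ((logD p).re - Real.log a) := by
    have : Real.exp 4 ≤
        Real.exp (4 * (Real.exp (-(logD p).im) * Real.cos ((logD p).re - Real.log a))) := by
      rw [← h, norm_peakD]
      exact mul_le_of_le_one_left (Real.exp_pos _).le hw
    linarith [Real.exp_le_exp.1 this]
  have hx : |(logD p).re - Real.log a| < 2 * π := by
    have hlog₂ : Real.log (1 / 2) = -Real.log 2 := by rw [one_div, Real.log_inv]
    have := Real.log_le_log (by norm_num) hp.1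
    have := Real.log_le_log (by norm_num) ha.1
    have := Real.log_nonpos (norm_nonneg p.1) hp.2.1
    have := Real.log_nonpos (by linarith [ha.1]) ha.2
    have := Real.log_two_lt_d9
    have := Real.pi_gt_three
    rw [logD_re, abs_lt]
    constructor <;> linarith
  obtain ⟨hy₀, hx₀⟩ := eq_zero_of_one_le_exp_neg_mul_cos hy hx hmax
  have hnorm : ‖p.1‖ = a := by
    refine Real.log_injOn_pos (mem_Ioi.2 ?_) (mem_Ioi.2 ?_) ?_
    · linarith [hp.1]
    · linarith [ha.1]
    · linarith [logD_re p]
  exact ⟨(hreal hy₀).trans (by rw [hnorm]), hw⟩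

theorem norm_peakD_ofReal_one {a : ℝ} (ha : 0 < a) : ‖peakD a ((a : ℂ), 1)‖ = Real.exp 4 := by
  have hlog : logD ((a : ℂ), 1) = Real.log a := by
    norm_num [logD, ha, ofReal_log ha.le]
  simp [norm_peakD, hlog]

theorem ofReal_one_mem_closure_domD {a : ℝ} (ha : a ∈ Icc (1 / 2 : ℝ) 1) :
    ((a : ℂ), (1 : ℂ)) ∈ closure domD := by
  let polar : ℝ × ℝ × ℂ → ℂ × ℂ := fun x => (x.1 * exp (x.2.1 * I), x.2.2)
  have hpolar : Continuous polar := by fun_prop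
  have hsub : polar '' (Ioo (1 / 2) 1 ×ˢ Ioo 0 (π / 2) ×ˢ Metric.ball 0 1) ⊆ domD := by
    rintro _ ⟨⟨r, φ, w⟩, ⟨hr, hφ, hw⟩, rfl⟩
    refine ⟨r, φ, hr.1, hr.2, hφ.1, by linarith [hφ.2, Real.pi_pos], rfl,
      fun _ => mem_ball_zero_iff.1 hw, fun h => absurd h (not_lt.2 hφ.2.le), fun h => ?_⟩
    linarith [hφ.2, Real.pi_pos]
  have hmem : ((a, 0, 1) : ℝ × ℝ × ℂ) ∈
      closure (Ioo (1 / 2) 1 ×ˢ Ioo 0 (π / 2) ×ˢ Metric.ball 0 1) := by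
    rw [closure_prod_eq, closure_prod_eq, closure_Ioo (by norm_num), closure_Ioo (by positivity),
      closure_ball _ one_ne_zero]
    exact ⟨ha, ⟨le_rfl, by positivity⟩, by simp⟩
  simpa [polar] using closure_mono hsub (image_closure_subset_closure_image hpolar ⟨_, hmem, rfl⟩)

theorem stmt3 (a : ℝ) (ha : a ∈ Icc (1 / 2 : ℝ) 1) (K : Set (ℂ × ℂ))
    (hKc : IsCompact K) (hKsub : K ⊆ closure domD)
    (hKn : IsNorming domD K (Ocl domD)) :
    (K ∩ {p : ℂ × ℂ | p.1 = (a : ℂ) ∧ ‖p.2‖ ≤ 1}).Nonempty := by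
  have ha₀ : 0 < a := by linarith [ha.1]
  have hf : peakD a ∈ Ocl domD :=
    mem_Ocl_of_analyticAt fun p hp => analyticAt_peakD a (closure_domD_subset_domDBar hp)
  have hmax : IsMaxOn (fun p => ‖peakD a p‖) (closure domD) ((a : ℂ), 1) := fun p hp => by
    simpa [norm_peakD_ofReal_one ha₀] using norm_peakD_le a (closure_domD_subset_domDBar hp)
  obtain ⟨k, hk, hnorm⟩ := hKn.exists_norm_eq hKc hKsub hf
    ((continuousOn_closure_of_mem_Ocl hf).mono hKsub) (ofReal_one_mem_closure_domD ha) hmax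
    (norm_ne_zero_iff.1 (by simp [norm_peakD_ofReal_one ha₀]))
  rw [norm_peakD_ofReal_one ha₀] at hnorm
  exact ⟨k, hk, eq_of_norm_peakD_eq ha (closure_domD_subset_domDBar (hKsub hk)) hnorm⟩
end
end

section
/- For every function f continuous on cl D and holomorphic on D one has sup_{∂D} |f| = sup_{∂D \ (I₀ × 𝔻)} |f|, where I₀ × 𝔻 = {(x, w) : x ∈ (1/2, 1), |w| < 1} is a relatively open subset of ∂D. -/
open Set Complex

noncomputable section

/-! For `x ∈ I₀` and `0 < φ < π/2` the disc `{x e^{iφ}} × 𝔻` lies in `D` and its boundary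
circle lies in `∂D \ (I₀ × 𝔻)`, so by the maximum principle `|f|` at the points of the disc is
bounded by the supremum over `∂D \ (I₀ × 𝔻)`. Letting `φ → 0⁺`, continuity of `f` on `cl D`
gives the same bound on `I₀ × 𝔻`. -/

open Filter Topology Metric

lemma ofReal_mul_exp_mul_I_inj {r r' φ φ' : ℝ} (hr : 0 < r) (hr' : 0 < r')
    (hφ : φ ∈ Ico 0 (2 * Real.pi)) (hφ' : φ' ∈ Ico 0 (2 * Real.pi))
    (h : (r : ℂ) * exp (φ * I) = r' * exp (φ' * I)) : r = r' ∧ φ = φ' := by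
  have hrr : r = r' := by
    simpa [norm_exp_ofReal_mul_I, abs_of_pos hr, abs_of_pos hr'] using congrArg norm h
  subst hrr
  refine ⟨rfl, Circle.exp_injOn_Ico (by simp) hφ hφ' (Circle.ext ?_)⟩
  simpa only [Circle.coe_exp] using mul_left_cancel₀ (ofReal_ne_zero.2 hr.ne') h

theorem norm_le_of_forall_mem_sphere_slice {E F : Type*} [NormedAddCommGroup E] [NormedSpace ℂ E]
    [NormedAddCommGroup F] [NormedSpace ℂ F] {S : Set (E × ℂ)} {f : E × ℂ → F}
    (hfc : ContinuousOn f (closure S)) (hfd : DifferentiableOn ℂ f S) {c : E} {a : ℂ} {r : ℝ}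
    (hr : r ≠ 0) (hS : {c} ×ˢ ball a r ⊆ S) {M : ℝ} (hM : ∀ z ∈ sphere a r, ‖f (c, z)‖ ≤ M)
    {w : ℂ} (hw : w ∈ closedBall a r) : ‖f (c, w)‖ ≤ M := by
  have hcl : {c} ×ˢ closedBall a r ⊆ closure S := by
    rw [← closure_ball a hr, ← closure_singleton, ← closure_prod_eq]
    exact closure_mono hS
  have hdc : DiffContOnCl ℂ (fun z => f (c, z)) (ball a r) := by
    refine ⟨hfd.comp ((differentiableOn_const c).prodMk differentiableOn_id)
      fun z hz => hS ⟨rfl, hz⟩, ?_⟩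
    rw [closure_ball a hr]
    exact hfc.comp (by fun_prop) fun z hz => hcl ⟨rfl, hz⟩
  exact Complex.norm_le_of_forall_mem_frontier_norm_le isBounded_ball hdc
    (by rwa [frontier_ball a hr]) (by rwa [closure_ball a hr])

lemma csSup_image_diff_eq {α β : Type*} [ConditionallyCompleteLattice β] {g : α → β}
    {K T : Set α} (hbdd : BddAbove (g '' K)) (hne : (K \ T).Nonempty)
    (h : ∀ p ∈ K ∩ T, g p ≤ sSup (g '' (K \ T))) :
    sSup (g '' K) = sSup (g '' (K \ T)) := by
  have hsub : g '' (K \ T) ⊆ g '' K := image_mono sdiff_subset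
  refine le_antisymm (csSup_le ((hne.mono sdiff_subset).image g) ?_)
    (csSup_le_csSup hbdd (hne.image g) hsub)
  rintro _ ⟨p, hp, rfl⟩
  by_cases hpT : p ∈ T
  · exact h p ⟨hp, hpT⟩
  · exact le_csSup (hbdd.mono hsub) ⟨p, ⟨hp, hpT⟩, rfl⟩

lemma isBounded_domD : Bornology.IsBounded domD := by
  refine (isBounded_closedBall (x := (0 : ℂ × ℂ)) (r := 3)).subset ?_
  rintro p ⟨r, φ, hr1, hr2, -, -, hp1, h1, h2, h3⟩
  have hp1 : ‖p.1‖ ≤ 3 := by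
    rw [hp1, norm_mul, norm_exp_ofReal_mul_I, mul_one, norm_real, Real.norm_of_nonneg (by linarith)]
    linarith
  have hp2 : ‖p.2‖ ≤ 3 := by
    rcases le_or_gt φ (Real.pi / 2) with hφ | hφ
    · linarith [h1 hφ]
    rcases lt_or_ge φ (3 * Real.pi / 2) with hφ' | hφ'
    · exact (h2 hφ hφ').le
    · exact (h3 hφ').2.le
  rw [mem_closedBall, dist_zero_right, Prod.norm_def]
  exact max_le hp1 hp2

lemma isCompact_frontier_domD : IsCompact (frontier domD) :=
  isCompact_of_isClosed_isBounded isClosed_frontier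
    (isBounded_domD.closure.subset frontier_subset_closure)

section FirstQuadrant

variable {r φ : ℝ} {w : ℂ}

lemma mk_mem_domD (hr : r ∈ Ioo (1 / 2) 1) (hφ : φ ∈ Ioo 0 (Real.pi / 2)) (hw : ‖w‖ < 1) :
    ((r : ℂ) * exp (φ * I), w) ∈ domD := by
  obtain ⟨hr1, hr2⟩ := hr
  obtain ⟨hφ1, hφ2⟩ := hφ
  have hpi := Real.pi_pos
  exact ⟨r, φ, hr1, hr2, hφ1, by linarith, rfl, fun _ => hw,
    fun h _ => absurd h (by linarith), fun h => absurd h (by linarith)⟩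

lemma mk_notMem_domD (hr : 0 < r) (hφ : φ ∈ Ioo 0 (Real.pi / 2)) (hw : 1 ≤ ‖w‖) :
    ((r : ℂ) * exp (φ * I), w) ∉ domD := by
  rintro ⟨r', φ', hr'1, -, hφ'1, hφ'2, h, hw', -, -⟩
  have hpi := Real.pi_pos
  obtain ⟨-, rfl⟩ := ofReal_mul_exp_mul_I_inj hr (by linarith) ⟨hφ.1.le, by linarith [hφ.2]⟩
    ⟨hφ'1.le, hφ'2⟩ h
  exact (hw' hφ.2.le).not_ge hw

lemma slice_subset_domD (hr : r ∈ Ioo (1 / 2) 1) (hφ : φ ∈ Ioo 0 (Real.pi / 2)) :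
    {(r : ℂ) * exp (φ * I)} ×ˢ ball 0 1 ⊆ domD := by
  rintro ⟨c, z⟩ ⟨rfl, hz⟩
  exact mk_mem_domD hr hφ (mem_ball_zero_iff.1 hz)

lemma mk_mem_frontier_domD (hr : r ∈ Ioo (1 / 2) 1) (hφ : φ ∈ Ioo 0 (Real.pi / 2))
    (hw : ‖w‖ = 1) : ((r : ℂ) * exp (φ * I), w) ∈ frontier domD := by
  refine ⟨closure_mono (slice_subset_domD hr hφ) ?_, fun h =>
    mk_notMem_domD (by linarith [hr.1]) hφ hw.ge (interior_subset h)⟩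
  rw [closure_prod_eq, closure_ball 0 one_ne_zero]
  exact ⟨subset_closure rfl, mem_closedBall_zero_iff.2 hw.le⟩

end FirstQuadrant

lemma norm_apply_le_of_forall_frontier_norm_snd_eq_one {f : ℂ × ℂ → ℂ} (hf : f ∈ Acl domD)
    {M : ℝ} (hM : ∀ q ∈ frontier domD, ‖q.2‖ = 1 → ‖f q‖ ≤ M) {x : ℝ} (hx : x ∈ Ioo (1 / 2) 1)
    {w : ℂ} (hw : ‖w‖ < 1) : ‖f (x, w)‖ ≤ M := by
  have hslice : ∀ φ ∈ Ioo 0 (Real.pi / 2), ‖f ((x : ℂ) * exp (φ * I), w)‖ ≤ M :=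
    fun φ hφ => norm_le_of_forall_mem_sphere_slice hf.1 hf.2 one_ne_zero (slice_subset_domD hx hφ)
      (fun z hz => hM _ (mk_mem_frontier_domD hx hφ (mem_sphere_zero_iff_norm.1 hz))
        (mem_sphere_zero_iff_norm.1 hz)) (mem_closedBall_zero_iff.2 hw.le)
  have hquad : ∀ᶠ φ in 𝓝[>] (0 : ℝ), φ ∈ Ioo 0 (Real.pi / 2) :=
    Ioo_mem_nhdsGT (by positivity)
  have hpath : Tendsto (fun φ : ℝ => ((x : ℂ) * exp (φ * I), w)) (𝓝[>] 0) (𝓝 ((x : ℂ), w)) := by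
    have hc : Continuous fun φ : ℝ => ((x : ℂ) * exp (φ * I), w) := by fun_prop
    simpa using (hc.tendsto 0).mono_left nhdsWithin_le_nhds
  have hpathD : Tendsto (fun φ : ℝ => ((x : ℂ) * exp (φ * I), w)) (𝓝[>] 0) (𝓝[domD] ((x : ℂ), w)) :=
    tendsto_nhdsWithin_iff.2 ⟨hpath, hquad.mono fun φ hφ => mk_mem_domD hx hφ hw⟩
  have hcl : ((x : ℂ), w) ∈ closure domD :=
    mem_closure_of_tendsto hpath (hquad.mono fun φ hφ => mk_mem_domD hx hφ hw)
  have hcont := ((hf.1 _ hcl).mono subset_closure).norm.tendsto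
  exact le_of_tendsto (hcont.comp hpathD) (hquad.mono hslice)

theorem stmt12 (f : ℂ × ℂ → ℂ) (hf : f ∈ Acl domD) :
    sSup ((fun p => ‖f p‖) '' frontier domD) =
      sSup ((fun p => ‖f p‖) '' (frontier domD \
        {p : ℂ × ℂ | (∃ x : ℝ, 1 / 2 < x ∧ x < 1 ∧ p.1 = (x : ℂ)) ∧ ‖p.2‖ < 1})) := by
  have hbdd : BddAbove ((fun p => ‖f p‖) '' frontier domD) :=
    (isCompact_frontier_domD.image_of_continuousOn
      (hf.1.mono frontier_subset_closure).norm).bddAbove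
  have hcircle : ∀ q ∈ frontier domD, ‖q.2‖ = 1 → q ∈ frontier domD \
      {p : ℂ × ℂ | (∃ x : ℝ, 1 / 2 < x ∧ x < 1 ∧ p.1 = (x : ℂ)) ∧ ‖p.2‖ < 1} :=
    fun q hq hq1 => ⟨hq, fun h => h.2.ne hq1⟩
  have hpi := Real.pi_pos
  refine csSup_image_diff_eq hbdd ⟨_, hcircle _ (mk_mem_frontier_domD (r := 3 / 4)
    (φ := Real.pi / 4) (w := 1) (by norm_num) ⟨by positivity, by linarith⟩ norm_one) norm_one⟩ ?_
  rintro ⟨_, w⟩ ⟨-, ⟨x, hx1, hx2, rfl⟩, hw⟩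
  exact norm_apply_le_of_forall_frontier_norm_snd_eq_one hf
    (fun q hq hq1 => le_csSup (hbdd.mono (image_mono sdiff_subset)) ⟨q, hcircle q hq hq1, rfl⟩)
    ⟨hx1, hx2⟩ hw
end
end
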